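/- Let φ(x,ξ) be real-valued, C² on ℝⁿ × (ℝⁿ∖{0}), positively homogeneous of degree 1 in ξ, with |∂_ξ^α ∂_x^β φ| ≤ C_{α,β}|ξ|^{1−|α|} for |α|+|β| ≥ 2, and satisfying the strong non-degeneracy condition |det ∂²φ/∂x∂ξ(x,ξ)| ≥ c > 0 for all x and ξ ≠ 0. Define Φ(x,y,ξ) = φ(x,ξ) − φ(y,ξ). Then there exist constants c₁, c₂ > 0 such that c₁|x−y| ≤ |∇_ξ Φ(x,y,ξ)| ≤ c₂|x−y| for all x, y ∈ ℝⁿ and all ξ in the annulus 1/2 ≤ |ξ| ≤ 2. -/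

import Mathlib

/-!
Fix ξ ≠ 0 and let `g x = ∂_ξ φ(x, ξ)`, so that `∇_ξ Φ(x, y, ξ) = g x - g y`. The derivative of `g`
is the mixed Hessian: its norm is bounded by the `Φ²` bound, hence the upper estimate by the mean
value inequality, and since its determinant is at least `c`, a compactness argument bounds
`‖v‖ ≤ M ‖Dg(z) v‖` uniformly in `z`.

The lower estimate is a global inverse function argument of Hadamard type. By the inverse function
theorem `g` is open and locally `2M`-expanding, uniformly so on compact sets. Fine discretisations
of segments in the target can therefore be lifted step by step through `g`. When the segments from
`g y` to `g (y + t (x - y))` are lifted for `t = 0, 1/N, …, 1`, consecutive lifts stay close, so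
local injectivity shows inductively that each ends at `y + t (x - y)`. For `t = 1` the lift ends
at `x`, and its length bounds `‖x - y‖` by `2M ‖g x - g y‖`.
-/

open Metric Set Finset Filter Topology
open scoped NNReal

section Lifting

variable {X Y : Type*} [MetricSpace X] [MetricSpace Y] {g : X → Y} {M : ℝ}

def IsChainLift (g : X → Y) (M : ℝ) (N : ℕ) (Q : ℕ → Y) (Z : ℕ → X) : Prop :=
  (∀ k ≤ N, g (Z k) = Q k) ∧ ∀ k < N, dist (Z (k + 1)) (Z k) ≤ M * dist (Q (k + 1)) (Q k)

theorem IsChainLift.dist_le {N : ℕ} {Q : ℕ → Y} {Z : ℕ → X} (h : IsChainLift g M N Q Z)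
    {k : ℕ} (hk : k ≤ N) : dist (Z k) (Z 0) ≤ M * ∑ i ∈ range k, dist (Q (i + 1)) (Q i) := by
  rw [dist_comm, mul_sum]
  refine (dist_le_range_sum_dist Z k).trans (sum_le_sum fun i hi => ?_)
  rw [dist_comm]
  exact h.2 i (by rw [Finset.mem_range] at hi; omega)

theorem IsChainLift.mem_closedBall (hM : 0 ≤ M) {N : ℕ} {Q : ℕ → Y} {Z : ℕ → X}
    (h : IsChainLift g M N Q Z) {k : ℕ} (hk : k ≤ N) :
    Z k ∈ closedBall (Z 0) (M * ∑ i ∈ range N, dist (Q (i + 1)) (Q i)) :=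
  Metric.mem_closedBall.2 <| (h.dist_le hk).trans <| by gcongr

theorem exists_isChainLift {B : Set X} {ρ : ℝ} (hM : 0 ≤ M)
    (hinv : ∀ u ∈ B, ∀ q, dist q (g u) < ρ → ∃ a, g a = q ∧ dist a u ≤ M * dist q (g u))
    {y : X} {N : ℕ} {Q : ℕ → Y} (hQ0 : Q 0 = g y) (hQ : ∀ k < N, dist (Q (k + 1)) (Q k) < ρ)
    (hB : closedBall y (M * ∑ i ∈ range N, dist (Q (i + 1)) (Q i)) ⊆ B) :
    ∃ Z, Z 0 = y ∧ IsChainLift g M N Q Z := by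
  have : Nonempty X := ⟨y⟩
  choose! L hL using hinv
  let Z : ℕ → X := fun k => Nat.rec y (fun k z => L z (Q (k + 1))) k
  refine ⟨Z, rfl, ?_⟩
  suffices ∀ k ≤ N, IsChainLift g M k Q Z from this N le_rfl
  intro k
  induction k with
  | zero => exact fun _ => ⟨fun k hk => by rw [Nat.le_zero.1 hk, hQ0]; rfl, by simp⟩
  | succ k ih =>
    intro hk
    have hZ := ih (by omega)
    have hZB : Z k ∈ B := hB <| closedBall_subset_closedBall (by gcongr; omega)
      (hZ.mem_closedBall hM le_rfl)
    obtain ⟨hgL, hdL⟩ := hL (Z k) hZB (Q (k + 1)) (by rw [hZ.1 k le_rfl]; exact hQ k hk)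
    refine ⟨fun i hi => ?_, fun i hi => ?_⟩
    · rcases Nat.lt_or_eq_of_le hi with hi | rfl
      · exact hZ.1 i (by omega)
      · exact hgL
    · rcases Nat.lt_or_eq_of_le (Nat.le_of_lt_succ hi) with hi | rfl
      · exact hZ.2 i hi
      · rw [← hZ.1 i le_rfl]; exact hdL

theorem IsChainLift.dist_le_mul_dist {B : Set X} {r J η : ℝ} (hM : 0 ≤ M)
    (hexp : ∀ u ∈ B, ∀ a ∈ ball u r, ∀ b ∈ ball u r, dist a b ≤ M * dist (g a) (g b))
    {N : ℕ} {Q Q' : ℕ → Y} {Z Z' : ℕ → X} (hZ : IsChainLift g M N Q Z)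
    (hZ' : IsChainLift g M N Q' Z') (h0 : Z 0 = Z' 0) (hB : ∀ k < N, Z k ∈ B)
    (hQ : ∀ k < N, dist (Q (k + 1)) (Q k) ≤ J) (hQ' : ∀ k < N, dist (Q' (k + 1)) (Q' k) ≤ J)
    (hQQ' : ∀ k ≤ N, dist (Q k) (Q' k) ≤ η) (hr : M * (J + η) < r) :
    ∀ k ≤ N, dist (Z k) (Z' k) ≤ M * dist (Q k) (Q' k) := by
  intro k
  induction k with
  | zero => intro _; rw [h0, dist_self]; positivity
  | succ k ih =>
    intro hk
    replace hk : k < N := hk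
    have hstep : dist (Z (k + 1)) (Z k) ≤ M * J :=
      (hZ.2 k hk).trans (mul_le_mul_of_nonneg_left (hQ k hk) hM)
    have hstep' : dist (Z' (k + 1)) (Z' k) ≤ M * J :=
      (hZ'.2 k hk).trans (mul_le_mul_of_nonneg_left (hQ' k hk) hM)
    have hclose : dist (Z' k) (Z k) ≤ M * η := by
      rw [dist_comm]
      exact (ih hk.le).trans (mul_le_mul_of_nonneg_left (hQQ' k hk.le) hM)
    have hη : 0 ≤ M * η := dist_nonneg.trans hclose
    have h := hexp (Z k) (hB k hk) (Z (k + 1)) (mem_ball.2 (by linarith))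
      (Z' (k + 1)) (mem_ball.2 (by linarith [dist_triangle (Z' (k + 1)) (Z' k) (Z k)]))
    rwa [hZ.1 _ hk, hZ'.1 _ hk] at h

theorem exists_uniform_expansion_radius {B : Set X} (hB : IsCompact B)
    (hloc : ∀ z, ∃ ε > 0, ∀ a ∈ ball z ε, ∀ b ∈ ball z ε, dist a b ≤ M * dist (g a) (g b)) :
    ∃ r > 0, ∀ u ∈ B, ∀ a ∈ ball u r, ∀ b ∈ ball u r, dist a b ≤ M * dist (g a) (g b) := by
  choose ε hε hexp using hloc
  obtain ⟨r, hr, hcover⟩ := lebesgue_number_lemma_of_metric hB (fun z => isOpen_ball)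
    (fun u _ => mem_iUnion.2 ⟨u, mem_ball_self (hε u)⟩)
  refine ⟨r, hr, fun u hu => ?_⟩
  obtain ⟨z, hz⟩ := hcover u hu
  exact fun a ha b hb => hexp z a (hz ha) b (hz hb)

end Lifting

section LocalPreimage

variable {X Y : Type*} [MetricSpace X] [NormedAddCommGroup Y] [NormedSpace ℝ Y] [ProperSpace X]
  {g : X → Y} {M r : ℝ}

-- `g '' ball u r` is open, and relatively closed in the connected `ball (g u) (r / M)`: the set
-- `g '' closedBall u r` is compact, and by expansion its points in that ball come from `ball u r`.
theorem ball_subset_image_ball (hopen : IsOpenMap g) (hcont : Continuous g) (hM : 0 < M)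
    (hr : 0 < r) {u : X} (hexp : ∀ a ∈ closedBall u r, dist a u ≤ M * dist (g a) (g u)) :
    ball (g u) (r / M) ⊆ g '' ball u r := by
  refine isPreconnected_ball.subset_of_closure_inter_subset (hopen _ isOpen_ball)
    ⟨g u, mem_ball_self (by positivity), mem_image_of_mem g (mem_ball_self hr)⟩ ?_
  rintro p ⟨hp, hpu⟩
  have hclosed : IsClosed (g '' closedBall u r) :=
    ((isCompact_closedBall u r).image hcont).isClosed
  obtain ⟨a, ha, rfl⟩ := closure_minimal (image_mono ball_subset_closedBall) hclosed hp
  refine mem_image_of_mem g (mem_ball.2 ?_)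
  calc dist a u ≤ M * dist (g a) (g u) := hexp a ha
    _ < M * (r / M) := by gcongr; exact mem_ball.1 hpu
    _ = r := by field_simp

theorem exists_local_preimage (hopen : IsOpenMap g) (hcont : Continuous g) (hM : 0 < M) (hr : 0 < r)
    {B : Set X} (hexp : ∀ u ∈ B, ∀ a ∈ ball u r, ∀ b ∈ ball u r, dist a b ≤ M * dist (g a) (g b)) :
    ∀ u ∈ B, ∀ q, dist q (g u) < r / 2 / M → ∃ a, g a = q ∧ dist a u ≤ M * dist q (g u) := by
  intro u hu q hq
  have hball : closedBall u (r / 2) ⊆ ball u r := closedBall_subset_ball (by linarith)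
  obtain ⟨a, ha, rfl⟩ := ball_subset_image_ball hopen hcont hM (by positivity)
    (fun a ha => hexp u hu a (hball ha) u (mem_ball_self hr)) hq
  exact ⟨a, rfl, hexp u hu a (hball (ball_subset_closedBall ha)) u (mem_ball_self hr)⟩

end LocalPreimage

section SegmentChain

variable {Y : Type*} [NormedAddCommGroup Y] [NormedSpace ℝ Y]

open AffineMap

noncomputable def segmentChain (p q : Y) (N : ℕ) (k : ℕ) : Y := lineMap p q ((k : ℝ) / N)

@[simp] theorem segmentChain_zero (p q : Y) (N : ℕ) : segmentChain p q N 0 = p := by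
  simp [segmentChain]

@[simp] theorem segmentChain_self (p q : Y) {N : ℕ} (hN : N ≠ 0) : segmentChain p q N N = q := by
  simp [segmentChain, hN]

@[simp] theorem segmentChain_same (p : Y) (N k : ℕ) : segmentChain p p N k = p := by
  simp [segmentChain]

theorem dist_segmentChain_succ (p q : Y) (N k : ℕ) :
    dist (segmentChain p q N (k + 1)) (segmentChain p q N k) = dist p q / N := by
  rw [segmentChain, segmentChain, dist_lineMap_lineMap, Real.dist_eq, Nat.cast_succ, add_div,
    add_sub_cancel_left, abs_div, abs_one, one_div_mul_eq_div, Nat.abs_cast]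

theorem sum_dist_segmentChain (p q : Y) {N : ℕ} (hN : N ≠ 0) :
    ∑ k ∈ range N, dist (segmentChain p q N (k + 1)) (segmentChain p q N k) = dist p q := by
  simp only [dist_segmentChain_succ, sum_const, card_range, nsmul_eq_mul]
  field_simp

theorem dist_segmentChain_le (p q q' : Y) {N k : ℕ} (hk : k ≤ N) :
    dist (segmentChain p q N k) (segmentChain p q' N k) ≤ dist q q' := by
  rw [segmentChain, segmentChain, dist_eq_norm, lineMap_apply_module, lineMap_apply_module,
    add_sub_add_left_eq_sub, ← smul_sub, norm_smul, ← dist_eq_norm]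
  refine mul_le_of_le_one_left dist_nonneg ?_
  rw [Real.norm_eq_abs, abs_of_nonneg (by positivity)]
  exact div_le_one_of_le₀ (Nat.cast_le.2 hk) (Nat.cast_nonneg N)

end SegmentChain

section GlobalExpansion

variable {X Y : Type*} [NormedAddCommGroup X] [NormedSpace ℝ X] [NormedAddCommGroup Y]
  [NormedSpace ℝ Y] {g : X → Y} {M : ℝ} {K : ℝ≥0}

-- A discrete homotopy from the constant chain at `g y` (`m = 0`) to the segment from `g y` to `g x`
-- (`m = N`), whose chains end at the images of the points of the segment from `y` to `x`.
noncomputable def fanChain (g : X → Y) (y x : X) (N m : ℕ) : ℕ → Y :=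
  segmentChain (g y) (g (segmentChain y x N m)) N

theorem LipschitzWith.dist_image_segmentChain_le {W : Type*} [PseudoMetricSpace W] {f : X → W}
    (hf : LipschitzWith K f) (x y : X) {N m : ℕ} (hm : m ≤ N) :
    dist (f y) (f (segmentChain y x N m)) ≤ K * dist x y :=
  (hf.dist_le_mul _ _).trans <| by
    gcongr; simpa [dist_comm x] using dist_segmentChain_le y y x hm

theorem LipschitzWith.dist_fanChain_succ_le (hLip : LipschitzWith K g) (x y : X) {N m : ℕ}
    (hm : m ≤ N) (k : ℕ) :
    dist (fanChain g y x N m (k + 1)) (fanChain g y x N m k) ≤ K * dist x y / N := by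
  rw [fanChain, dist_segmentChain_succ]
  gcongr
  exact hLip.dist_image_segmentChain_le x y hm

theorem LipschitzWith.dist_fanChain_succ_fanChain_le (hLip : LipschitzWith K g) (x y : X)
    {N k : ℕ} (m : ℕ) (hk : k ≤ N) :
    dist (fanChain g y x N (m + 1) k) (fanChain g y x N m k) ≤ K * dist x y / N :=
  (dist_segmentChain_le _ _ _ hk).trans <| (hLip.dist_le_mul _ _).trans_eq <| by
    rw [dist_segmentChain_succ, dist_comm y x, mul_div_assoc]

theorem dist_le_mul_dist_of_uniformly_expanding (hM : 0 < M) (hLip : LipschitzWith K g)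
    {B : Set X} {r ρ : ℝ}
    (hexp : ∀ u ∈ B, ∀ a ∈ ball u r, ∀ b ∈ ball u r, dist a b ≤ M * dist (g a) (g b))
    (hinv : ∀ u ∈ B, ∀ q, dist q (g u) < ρ → ∃ a, g a = q ∧ dist a u ≤ M * dist q (g u))
    (hρr : 2 * M * ρ ≤ r) {x y : X} (hB : closedBall y (M * (K * dist x y)) ⊆ B) {N : ℕ}
    (hN : N ≠ 0) (hKρ : K * dist x y / N < ρ) (hr : dist x y / N < r) :
    dist x y ≤ M * dist (g x) (g y) := by
  have hJ : M * (K * dist x y / N) < M * ρ := by gcongr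
  have hJ0 : 0 ≤ M * (K * dist x y / N) := by positivity
  have hQB (m : ℕ) (hm : m ≤ N) : closedBall y
      (M * ∑ k ∈ range N, dist (fanChain g y x N m (k + 1)) (fanChain g y x N m k)) ⊆ B := by
    rw [fanChain, sum_dist_segmentChain _ _ hN]
    exact (closedBall_subset_closedBall
      (by gcongr; exact hLip.dist_image_segmentChain_le x y hm)).trans hB
  have hlift (m : ℕ) (hm : m ≤ N) : ∃ Z, Z 0 = y ∧ IsChainLift g M N (fanChain g y x N m) Z :=
    exists_isChainLift hM.le hinv (segmentChain_zero _ _ _)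
      (fun k _ => (hLip.dist_fanChain_succ_le x y hm k).trans_lt hKρ) (hQB m hm)
  choose! Z hZ0 hZ using hlift
  have hZB (m : ℕ) (hm : m ≤ N) (k : ℕ) (hk : k ≤ N) : Z m k ∈ B :=
    hQB m hm (hZ0 m hm ▸ (hZ m hm).mem_closedBall hM.le hk)
  have hend (m : ℕ) (hm : m ≤ N) : Z m N = segmentChain y x N m := by
    induction m with
    | zero =>
      have h := (hZ 0 hm).dist_le le_rfl
      rwa [fanChain, sum_dist_segmentChain _ _ hN, hZ0 0 hm, segmentChain_zero, dist_self,
        mul_zero, dist_le_zero, ← segmentChain_zero y x N] at h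
    | succ m ih =>
      have hclose := (hZ (m + 1) hm).dist_le_mul_dist hM.le hexp (hZ m (by omega))
        (by rw [hZ0 _ hm, hZ0 _ (by omega)]) (fun k hk => hZB _ hm k hk.le)
        (fun k _ => hLip.dist_fanChain_succ_le x y hm k)
        (fun k _ => hLip.dist_fanChain_succ_le x y (by omega) k)
        (fun k hk => hLip.dist_fanChain_succ_fanChain_le x y m hk) (by linarith) N le_rfl
      rw [ih (by omega)] at hclose
      have h := hexp _ (ih (by omega) ▸ hZB m (by omega) N le_rfl) (Z (m + 1) N)
        (mem_ball.2 (hclose.trans_lt ?_)) _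
        (mem_ball.2 ((dist_segmentChain_succ y x N m).trans_lt (by rwa [dist_comm])))
      · rwa [(hZ (m + 1) hm).1 N le_rfl, fanChain, segmentChain_self _ _ hN, dist_self, mul_zero,
          dist_le_zero] at h
      · calc _ ≤ M * (K * dist x y / N) := by
              gcongr; exact hLip.dist_fanChain_succ_fanChain_le x y m le_rfl
          _ < r := by linarith
  calc dist x y = dist (Z N N) (Z N 0) := by
        rw [hend N le_rfl, segmentChain_self _ _ hN, hZ0 N le_rfl]
    _ ≤ M * ∑ k ∈ range N, dist (fanChain g y x N N (k + 1)) (fanChain g y x N N k) :=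
        (hZ N le_rfl).dist_le le_rfl
    _ = M * dist (g x) (g y) := by
        rw [fanChain, sum_dist_segmentChain _ _ hN, segmentChain_self _ _ hN, dist_comm]

theorem dist_le_mul_dist_of_locally_expanding [ProperSpace X] (hM : 0 < M) (hopen : IsOpenMap g)
    (hLip : LipschitzWith K g)
    (hloc : ∀ z, ∃ ε > 0, ∀ a ∈ ball z ε, ∀ b ∈ ball z ε, dist a b ≤ M * dist (g a) (g b))
    (x y : X) : dist x y ≤ M * dist (g x) (g y) := by
  obtain ⟨r, hr, hexp⟩ :=
    exists_uniform_expansion_radius (isCompact_closedBall y (M * (K * dist x y))) hloc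
  have hρ : 0 < r / 2 / M := by positivity
  obtain ⟨N, hN⟩ := exists_nat_gt (K * dist x y / (r / 2 / M) + dist x y / r)
  have hK : K * dist x y / (r / 2 / M) < N := by
    linarith [div_nonneg dist_nonneg hr.le (a := dist x y)]
  have hd : dist x y / r < N := by
    linarith [div_nonneg (by positivity) hρ.le (a := K * dist x y)]
  have hN' : (0 : ℝ) < N := (div_nonneg dist_nonneg hr.le).trans_lt hd
  refine dist_le_mul_dist_of_uniformly_expanding hM hLip hexp
    (exists_local_preimage hopen hLip.continuous hM hr hexp) (by field_simp; rfl) subset_rfl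
    (Nat.cast_pos.1 hN').ne' ?_ ?_
  · rw [div_lt_iff₀ hN', mul_comm (r / 2 / M)]; rwa [div_lt_iff₀ hρ] at hK
  · rw [div_lt_iff₀ hN', mul_comm r]; rwa [div_lt_iff₀ hr] at hd

end GlobalExpansion

section Derivative

variable {E F : Type*} [NormedAddCommGroup E] [NormedSpace ℝ E] [NormedAddCommGroup F]
  [NormedSpace ℝ F] {g : E → F} {M : ℝ}

theorem HasStrictFDerivAt.exists_ball_dist_le {g' : E →L[ℝ] F} {z : E}
    (hg : HasStrictFDerivAt g g' z) (hM : 0 < M) (hg' : ∀ v, ‖v‖ ≤ M * ‖g' v‖) :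
    ∃ ε > 0, ∀ a ∈ ball z ε, ∀ b ∈ ball z ε, dist a b ≤ 2 * M * dist (g a) (g b) := by
  obtain ⟨s, hs, happrox⟩ :=
    hg.approximates_deriv_on_nhds (c := (2 * M).toNNReal⁻¹) (Or.inr (by positivity))
  obtain ⟨ε, hε, hball⟩ := Metric.mem_nhds_iff.1 hs
  refine ⟨ε, hε, fun a ha b hb => ?_⟩
  have happ : ‖g a - g b - g' (a - b)‖ ≤ (2 * M)⁻¹ * ‖a - b‖ := by
    simpa [hM.le] using happrox a (hball ha) b (hball hb)
  have hlin : ‖g' (a - b)‖ ≤ ‖g a - g b‖ + (2 * M)⁻¹ * ‖a - b‖ := by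
    calc ‖g' (a - b)‖ = ‖(g a - g b) - (g a - g b - g' (a - b))‖ := by rw [sub_sub_cancel]
      _ ≤ _ := (norm_sub_le _ _).trans (by gcongr)
  have hhalf : M * (2 * M)⁻¹ = 1 / 2 := by field_simp
  have h := mul_le_mul_of_nonneg_left hlin hM.le
  rw [mul_add, ← mul_assoc, hhalf] at h
  rw [dist_eq_norm, dist_eq_norm]
  linarith [hg' (a - b)]

theorem dist_le_mul_dist_of_hasStrictFDerivAt [FiniteDimensional ℝ E] [FiniteDimensional ℝ F]
    (hdim : Module.finrank ℝ E = Module.finrank ℝ F) {g' : E → E →L[ℝ] F} {K : ℝ≥0}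
    (hg : ∀ z, HasStrictFDerivAt g (g' z) z) (hK : ∀ z, ‖g' z‖ ≤ K) (hM : 0 < M)
    (hg' : ∀ z v, ‖v‖ ≤ M * ‖g' z v‖) (x y : E) : dist x y ≤ 2 * M * dist (g x) (g y) := by
  have hsurj (z : E) : Function.Surjective (g' z) := by
    refine (LinearMap.injective_iff_surjective_of_finrank_eq_finrank hdim
      (f := (g' z : E →ₗ[ℝ] F))).1 fun a b hab => ?_
    have h := hg' z (a - b)
    rw [map_sub, show g' z a = g' z b from hab, sub_self, norm_zero, mul_zero] at h
    exact sub_eq_zero.1 (norm_le_zero_iff.1 h)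
  exact dist_le_mul_dist_of_locally_expanding (by positivity)
    (isOpenMap_iff_nhds_le.2 fun z =>
      ((hg z).map_nhds_eq_of_surj (LinearMap.range_eq_top.2 (hsurj z))).ge)
    (lipschitzWith_of_nnnorm_fderiv_le (fun z => (hg z).differentiableAt) fun z => by
      rw [(hg z).hasFDerivAt.fderiv]; exact_mod_cast hK z)
    (fun z => (hg z).exists_ball_dist_le hM (hg' z)) x y

end Derivative

section Bilinear

variable {ι E : Type*} [Fintype ι] [DecidableEq ι] [NormedAddCommGroup E] [NormedSpace ℝ E]

theorem eq_zero_of_apply_eq_zero_of_det_ne_zero (b : Module.Basis ι ℝ E)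
    {B : E →L[ℝ] E →L[ℝ] ℝ} (hB : (Matrix.of fun i j => B (b i) (b j)).det ≠ 0) {v : E}
    (hv : B v = 0) : v = 0 :=
  (LinearMap.BilinForm.nondegenerate_of_det_ne_zero B.toLinearMap₁₂ b (by
    convert hB using 2
    ext i j
    simp [LinearMap.BilinForm.toMatrix_apply])).1 v fun w => by simp [hv]

theorem exists_norm_le_mul_norm_apply_of_le_abs_det [FiniteDimensional ℝ E]
    (b : Module.Basis ι ℝ E) (K : ℝ) {c : ℝ} (hc : 0 < c) :
    ∃ C, ∀ B : E →L[ℝ] E →L[ℝ] ℝ, ‖B‖ ≤ K →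
      c ≤ |(Matrix.of fun i j => B (b i) (b j)).det| → ∀ v, ‖v‖ ≤ C * ‖B v‖ := by
  set S := closedBall (0 : E →L[ℝ] E →L[ℝ] ℝ) K ∩
    {B | c ≤ |(Matrix.of fun i j => B (b i) (b j)).det|}
  have hS : IsCompact (S ×ˢ sphere (0 : E) 1) := by
    have : ProperSpace (E →L[ℝ] E →L[ℝ] ℝ) := FiniteDimensional.proper_real (E →L[ℝ] E →L[ℝ] ℝ)
    refine ((isCompact_closedBall _ _).inter_right (isClosed_le continuous_const ?_)).prod
      (isCompact_sphere _ _)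
    exact (Continuous.matrix_det (continuous_pi fun i => continuous_pi fun j =>
      (continuous_id.clm_apply continuous_const).clm_apply continuous_const)).abs
  have hne : ∀ p ∈ S ×ˢ sphere (0 : E) 1, ‖p.1 p.2‖ ≠ 0 := by
    rintro ⟨B, v⟩ ⟨⟨-, hdet⟩, hv⟩ h
    have hdet0 : (Matrix.of fun i j => B (b i) (b j)).det ≠ 0 := fun h0 => by
      simp only [mem_ofPred_eq, h0, abs_zero] at hdet
      linarith
    rw [eq_zero_of_apply_eq_zero_of_det_ne_zero b hdet0 (norm_eq_zero.1 h),
      mem_sphere_zero_iff_norm, norm_zero] at hv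
    exact zero_ne_one hv
  obtain ⟨C, hC⟩ := hS.exists_bound_of_continuousOn
    (f := fun p : (E →L[ℝ] E →L[ℝ] ℝ) × E => ‖p.1 p.2‖⁻¹)
    ((continuous_fst.clm_apply continuous_snd).norm.continuousOn.inv₀ hne)
  refine ⟨C, fun B hB hdet v => ?_⟩
  rcases eq_or_ne v 0 with rfl | hv
  · simp
  have hmem : (B, ‖v‖⁻¹ • v) ∈ S ×ˢ sphere (0 : E) 1 :=
    ⟨⟨mem_closedBall.2 ((dist_zero_right B).trans_le hB), hdet⟩, by simp [norm_smul, hv]⟩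
  have h := hC _ hmem
  have h0 := hne _ hmem
  rw [Real.norm_of_nonneg (inv_nonneg.2 (norm_nonneg _))] at h
  simp only [map_smul, norm_smul, norm_inv, norm_norm, mul_inv, inv_inv] at h h0
  have hBv : 0 < ‖B v‖ := (norm_nonneg _).lt_of_ne (right_ne_zero_of_mul h0).symm
  rwa [← div_eq_mul_inv, div_le_iff₀ hBv] at h

end Bilinear

section MixedPartials

variable {E₁ E₂ G : Type*} [NormedAddCommGroup E₁] [NormedSpace ℝ E₁] [NormedAddCommGroup E₂]
  [NormedSpace ℝ E₂] [NormedAddCommGroup G] [NormedSpace ℝ G] {f : E₁ → E₂ → G} {x : E₁} {y : E₂}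

theorem fderiv_partial_fst (h : DifferentiableAt ℝ (Function.uncurry f) (x, y)) :
    fderiv ℝ (fun x' => f x' y) x =
      (fderiv ℝ (Function.uncurry f) (x, y)).comp (.inl ℝ E₁ E₂) :=
  HasFDerivAt.fderiv (f := Function.uncurry f ∘ fun x' => (x', y))
    (h.hasFDerivAt.comp x (hasFDerivAt_prodMk_left x y))

theorem fderiv_partial_snd (h : DifferentiableAt ℝ (Function.uncurry f) (x, y)) :
    fderiv ℝ (f x) y = (fderiv ℝ (Function.uncurry f) (x, y)).comp (.inr ℝ E₁ E₂) :=
  (h.hasFDerivAt.comp y (hasFDerivAt_prodMk_right x y)).fderiv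

theorem fderiv_fderiv_partial_comm (hf : ContDiffAt ℝ 2 (Function.uncurry f) (x, y)) :
    fderiv ℝ (fun x' => fderiv ℝ (f x') y) x =
      (fderiv ℝ (fun y' => fderiv ℝ (fun x' => f x' y') x) y).flip := by
  have hdiff : ∀ᶠ p in 𝓝 (x, y), DifferentiableAt ℝ (Function.uncurry f) p :=
    (hf.eventually (by simp)).mono fun p hp => hp.differentiableAt (by norm_num)
  have hD : DifferentiableAt ℝ (fderiv ℝ (Function.uncurry f)) (x, y) :=
    (hf.fderiv_right (m := 1) (by norm_num)).differentiableAt one_ne_zero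
  have h₁ : (fun x' => fderiv ℝ (f x') y) =ᶠ[𝓝 x]
      fun x' => (fderiv ℝ (Function.uncurry f) (x', y)).comp (.inr ℝ E₁ E₂) :=
    ((continuous_id.prodMk continuous_const).tendsto x |>.eventually hdiff).mono
      fun x' hx' => fderiv_partial_snd hx'
  have h₂ : (fun y' => fderiv ℝ (fun x' => f x' y') x) =ᶠ[𝓝 y]
      fun y' => (fderiv ℝ (Function.uncurry f) (x, y')).comp (.inl ℝ E₁ E₂) :=
    ((continuous_const.prodMk continuous_id).tendsto y |>.eventually hdiff).mono
      fun y' hy' => fderiv_partial_fst hy'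
  rw [h₁.fderiv_eq, h₂.fderiv_eq,
    ((hD.hasFDerivAt.comp x (hasFDerivAt_prodMk_left x y)).clm_comp
      (hasFDerivAt_const _ x)).fderiv,
    HasFDerivAt.fderiv (f := fun y' => (fderiv ℝ (Function.uncurry f) (x, y')).comp (.inl ℝ E₁ E₂))
      ((hD.hasFDerivAt.comp y (hasFDerivAt_prodMk_right x y)).clm_comp (hasFDerivAt_const _ y))]
  ext v w
  simpa using hf.isSymmSndFDerivAt (by simp) (ContinuousLinearMap.inl ℝ E₁ E₂ v)
    (ContinuousLinearMap.inr ℝ E₁ E₂ w)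

theorem fderiv_fderiv_partial_apply_comm (hf : ContDiffAt ℝ 2 (Function.uncurry f) (x, y))
    (v : E₁) (w : E₂) :
    fderiv ℝ (fun y' => fderiv ℝ (fun x' => f x' y') x v) y w =
      fderiv ℝ (fun x' => fderiv ℝ (f x') y) x v w := by
  have hswap : ContDiffAt ℝ 2 (Function.uncurry fun y' x' => f x' y') (y, x) :=
    hf.comp (y, x) (contDiff_snd.prodMk contDiff_fst).contDiffAt
  have hc := (hswap.fderiv (m := 1) contDiffAt_const (by norm_num)).differentiableAt one_ne_zero
  rw [fderiv_fderiv_partial_comm hf, fderiv_clm_apply hc (differentiableAt_const v)]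
  simp

theorem norm_iteratedFDeriv_one_iteratedFDeriv_one (f : E₁ → E₂ → G) (x : E₁) (y : E₂) :
    ‖iteratedFDeriv ℝ 1 (fun y' => iteratedFDeriv ℝ 1 (fun x' => f x' y') x) y‖ =
      ‖fderiv ℝ (fun y' => fderiv ℝ (fun x' => f x' y') x) y‖ := by
  have h : (fun y' => iteratedFDeriv ℝ 1 (fun x' => f x' y') x) =
      (continuousMultilinearCurryFin1 ℝ E₁ G).symm ∘ fun y' => fderiv ℝ (fun x' => f x' y') x := by
    funext y'
    ext m
    simp [iteratedFDeriv_one_apply]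
  rw [norm_iteratedFDeriv_one, h, LinearIsometryEquiv.comp_fderiv]
  exact LinearIsometry.norm_toContinuousLinearMap_comp
    (continuousMultilinearCurryFin1 ℝ E₁ G).symm.toLinearIsometry

end MixedPartials

theorem stmt_13_general (n : ℕ)
    (φ : EuclideanSpace ℝ (Fin n) → EuclideanSpace ℝ (Fin n) → ℝ)
    (hsm : ContDiffOn ℝ 2 (fun pr : EuclideanSpace ℝ (Fin n) × EuclideanSpace ℝ (Fin n) =>
      φ pr.1 pr.2) {pr | pr.2 ≠ 0})
    (hΦ2 : ∀ a b : ℕ, 2 ≤ a + b → ∃ C : ℝ, ∀ x (ξ : EuclideanSpace ℝ (Fin n)), ξ ≠ 0 →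
      ‖iteratedFDeriv ℝ a (fun ζ => iteratedFDeriv ℝ b (fun z => φ z ζ) x) ξ‖ ≤
        C * ‖ξ‖ ^ ((1 : ℝ) - a))
    (c : ℝ) (hc : 0 < c)
    (hSND : ∀ x (ξ : EuclideanSpace ℝ (Fin n)), ξ ≠ 0 →
      c ≤ |Matrix.det (Matrix.of fun i j : Fin n =>
        fderiv ℝ (fun ξ' => fderiv ℝ (fun x' => φ x' ξ') x (EuclideanSpace.single i 1))
          ξ (EuclideanSpace.single j 1))|) :
    ∃ c₁ : ℝ, 0 < c₁ ∧ ∃ c₂ : ℝ, 0 < c₂ ∧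
      ∀ x y (ξ : EuclideanSpace ℝ (Fin n)), (1 : ℝ) / 2 ≤ ‖ξ‖ → ‖ξ‖ ≤ 2 →
        c₁ * ‖x - y‖ ≤ ‖fderiv ℝ (fun ζ => φ x ζ - φ y ζ) ξ‖ ∧
        ‖fderiv ℝ (fun ζ => φ x ζ - φ y ζ) ξ‖ ≤ c₂ * ‖x - y‖ := by
  obtain ⟨C₀, hC₀⟩ := hΦ2 1 1 le_rfl
  let K : ℝ≥0 := ⟨max C₀ 1, le_max_of_le_right zero_le_one⟩
  obtain ⟨M, hM⟩ :=
    exists_norm_le_mul_norm_apply_of_le_abs_det (EuclideanSpace.basisFun (Fin n) ℝ).toBasis K hc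
  refine ⟨(2 * max M 1)⁻¹, by positivity, K, lt_max_of_lt_right one_pos, fun x y ξ hξ _ => ?_⟩
  have hξ0 : ξ ≠ 0 := norm_pos_iff.1 (by linarith)
  have hφ (z) : ContDiffAt ℝ 2 (Function.uncurry φ) (z, ξ) :=
    hsm.contDiffAt ((isOpen_ne_fun continuous_snd continuous_const).mem_nhds hξ0)
  set g := fun z => fderiv ℝ (φ z) ξ
  have hg (z) : HasStrictFDerivAt g (fderiv ℝ g z) z :=
    ((hφ z).fderiv (m := 1) contDiffAt_const (by norm_num)).hasStrictFDerivAt one_ne_zero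
  have hK (z) : ‖fderiv ℝ g z‖ ≤ K := by
    have h := hC₀ z ξ hξ0
    rw [norm_iteratedFDeriv_one_iteratedFDeriv_one, Nat.cast_one, sub_self, Real.rpow_zero,
      mul_one] at h
    rw [fderiv_fderiv_partial_comm (hφ z), ContinuousLinearMap.opNorm_flip]
    exact h.trans (le_max_left _ _)
  have hinv (z v) : ‖v‖ ≤ max M 1 * ‖fderiv ℝ g z v‖ := by
    refine (hM _ (hK z) ?_ v).trans (by gcongr; exact le_max_left _ _)
    simpa [fderiv_fderiv_partial_apply_comm (hφ z)] using hSND z ξ hξ0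
  have hdiff (z) : DifferentiableAt ℝ (φ z) ξ :=
    ((hφ z).differentiableAt two_ne_zero).comp ξ (hasFDerivAt_prodMk_right z ξ).differentiableAt
  rw [fderiv_fun_sub (hdiff x) (hdiff y), ← dist_eq_norm, ← dist_eq_norm]
  refine ⟨?_, ?_⟩
  · have h := dist_le_mul_dist_of_hasStrictFDerivAt
      (LinearMap.toContinuousLinearMap.finrank_eq.symm.trans Subspace.dual_finrank_eq).symm
      hg hK (by positivity) hinv x y
    rwa [inv_mul_le_iff₀ (by positivity)]
  · exact (lipschitzWith_of_nnnorm_fderiv_le (fun z => (hg z).differentiableAt)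
      fun z => by exact_mod_cast hK z).dist_le_mul x y

/-- Two-sided gradient estimate for the difference phase Φ(x,y,ξ) = φ(x,ξ) − φ(y,ξ):
if φ is C², homogeneous of degree 1 in ξ, with |∂_ξ^α∂_x^β φ| ≤ C|ξ|^{1−|α|} for
|α|+|β| ≥ 2 and strongly non-degenerate (|det ∂²φ/∂x∂ξ| ≥ c > 0), then
c₁|x−y| ≤ |∇_ξΦ(x,y,ξ)| ≤ c₂|x−y| on the annulus 1/2 ≤ |ξ| ≤ 2. -/
theorem stmt_13 (n : ℕ)
    (φ : EuclideanSpace ℝ (Fin n) → EuclideanSpace ℝ (Fin n) → ℝ)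
    (hsm : ContDiffOn ℝ 2 (fun pr : EuclideanSpace ℝ (Fin n) × EuclideanSpace ℝ (Fin n) =>
      φ pr.1 pr.2) {pr | pr.2 ≠ 0})
    (hhom : ∀ x ξ (t : ℝ), 0 < t → φ x (t • ξ) = t * φ x ξ)
    (hΦ2 : ∀ a b : ℕ, 2 ≤ a + b → ∃ C : ℝ, ∀ x (ξ : EuclideanSpace ℝ (Fin n)), ξ ≠ 0 →
      ‖iteratedFDeriv ℝ a (fun ζ => iteratedFDeriv ℝ b (fun z => φ z ζ) x) ξ‖ ≤
        C * ‖ξ‖ ^ ((1 : ℝ) - a))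
    (c : ℝ) (hc : 0 < c)
    (hSND : ∀ x (ξ : EuclideanSpace ℝ (Fin n)), ξ ≠ 0 →
      c ≤ |Matrix.det (Matrix.of fun i j : Fin n =>
        fderiv ℝ (fun ξ' => fderiv ℝ (fun x' => φ x' ξ') x (EuclideanSpace.single i 1))
          ξ (EuclideanSpace.single j 1))|) :
    ∃ c₁ : ℝ, 0 < c₁ ∧ ∃ c₂ : ℝ, 0 < c₂ ∧
      ∀ x y (ξ : EuclideanSpace ℝ (Fin n)), (1 : ℝ) / 2 ≤ ‖ξ‖ → ‖ξ‖ ≤ 2 →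
        c₁ * ‖x - y‖ ≤ ‖fderiv ℝ (fun ζ => φ x ζ - φ y ζ) ξ‖ ∧
        ‖fderiv ℝ (fun ζ => φ x ζ - φ y ζ) ξ‖ ≤ c₂ * ‖x - y‖ :=
  stmt_13_general n φ hsm hΦ2 c hc hSND
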